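/- Suppose {a_n} is a sequence of nonnegative reals with a_n = 0 unless n is a power of q, and the formal Dirichlet-type series Σ_{r≥1} a_{q^r} t^r (with t = q^{-s}) equals a rational function f(t) having a pole of order b at t = q^{-a} and no poles with |t| ≤ q^{-a} otherwise (a > 0 real, b ≥ 1 integer). Then the partial sums satisfy Σ_{n≤X} a_n ≍ X^a (log X)^{b-1}, i.e., there exist positive constants c, C such that c X^a (log X)^{b-1} ≤ Σ_{n≤X} a_n ≤ C X^a (log X)^{b-1} for all sufficiently large X. -/

import Mathlib

/-!
Write `t₀ = q^{-A}` and factor `Q = (t₀ - X)^b Q₁`, where `Q₁` has no complex zero in the closed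
disc `|z| ≤ t₀`. For `F = ∑ a_{q^r} X^r`, the series `g = F · (t₀ - X)^b` satisfies `g Q₁ = P`,
so `g` is `P` times a product of geometric series and converges absolutely at `t₀`, with sum
`P(t₀) / Q₁(t₀)`; this is nonzero because `P` and `Q` are coprime. Expanding `(t₀ - X)^{-b}` by
the binomial series gives `a_{q^r} t₀^{r+b} = ∑_{j ≤ r} g_j t₀^j C(r - j + b - 1, b - 1)`, and
dominated convergence turns this into `a_{q^r} ~ L · C(r + b - 1, b - 1) · q^{Ar}`. The constant
`L` is positive, being a nonzero limit of nonnegative numbers. Thanks to the geometric factor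
`q^{Ar}`, the partial sum over `r ≤ ⌊log_q X⌋` is comparable to its last term, which is
`≍ X^A (log X)^{b-1}`.
-/

open Filter Topology Finset Asymptotics
open scoped Nat
open scoped Polynomial

/-! ### Power series converging absolutely at a point -/

namespace PowerSeries

section NormedCommRing

variable {R : Type*} [NormedCommRing R] {f g : R⟦X⟧} {x : R}

theorem coeff_mul_mul_pow (n : ℕ) :
    coeff n (f * g) * x ^ n =
      ∑ kl ∈ antidiagonal n, coeff kl.1 f * x ^ kl.1 * (coeff kl.2 g * x ^ kl.2) := by
  rw [coeff_mul, sum_mul]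
  refine sum_congr rfl fun kl hkl => ?_
  rw [← mem_antidiagonal.1 hkl, pow_add]
  ring

theorem summable_norm_coeff_mul_mul_pow (hf : Summable fun n => ‖coeff n f * x ^ n‖)
    (hg : Summable fun n => ‖coeff n g * x ^ n‖) :
    Summable fun n => ‖coeff n (f * g) * x ^ n‖ := by
  simpa only [coeff_mul_mul_pow] using summable_norm_sum_mul_antidiagonal_of_summable_norm hf hg

theorem tsum_coeff_mul_mul_pow [CompleteSpace R] (hf : Summable fun n => ‖coeff n f * x ^ n‖)
    (hg : Summable fun n => ‖coeff n g * x ^ n‖) :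
    ∑' n, coeff n (f * g) * x ^ n = (∑' n, coeff n f * x ^ n) * ∑' n, coeff n g * x ^ n := by
  simp only [coeff_mul_mul_pow, tsum_mul_tsum_eq_tsum_sum_antidiagonal_of_summable_norm hf hg]

end NormedCommRing

end PowerSeries

namespace Polynomial

variable {R : Type*} [NormedCommRing R]

theorem summable_norm_coeff_coe_mul_pow (p : R[X]) (x : R) :
    Summable fun n => ‖PowerSeries.coeff n (p : PowerSeries R) * x ^ n‖ := by
  refine summable_of_ne_finset_zero (s := p.support) fun n hn => ?_
  simp [coeff_coe, notMem_support_iff.1 hn]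

theorem tsum_coeff_coe_mul_pow (p : R[X]) (x : R) :
    ∑' n, PowerSeries.coeff n (p : PowerSeries R) * x ^ n = p.eval x := by
  rw [eval_eq_sum, sum_def, tsum_eq_sum (s := p.support) fun n hn => ?_]
  · simp [coeff_coe]
  · simp [coeff_coe, notMem_support_iff.1 hn]

end Polynomial

namespace PowerSeries

variable {𝕜 : Type*} [NormedField 𝕜]

theorem summable_norm_coeff_invUnitsSub_mul_pow {u : 𝕜ˣ} {x : 𝕜} (hx : ‖x‖ < ‖(u : 𝕜)‖) :
    Summable fun n => ‖coeff n (invUnitsSub u) * x ^ n‖ := by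
  have hu : 0 < ‖(u : 𝕜)‖ := (norm_nonneg x).trans_lt hx
  have hgeom := (summable_geometric_of_lt_one (by positivity) ((div_lt_one hu).2 hx)).mul_left
    ‖(u : 𝕜)‖⁻¹
  refine hgeom.congr fun n => ?_
  simp only [coeff_invUnitsSub, one_divp, Units.val_inv_eq_inv_val, Units.val_pow_eq_pow_val,
    norm_mul, norm_inv, norm_pow, div_pow]
  field_simp
  ring

end PowerSeries

namespace Polynomial

variable {𝕜 : Type*} [NormedField 𝕜] [IsAlgClosed 𝕜]

theorem exists_coe_mul_eq_one_and_summable_norm {p : 𝕜[X]} {x : 𝕜}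
    (hroots : ∀ z, p.IsRoot z → ‖x‖ < ‖z‖) :
    ∃ V : PowerSeries 𝕜, (p : PowerSeries 𝕜) * V = 1 ∧
      Summable fun n => ‖PowerSeries.coeff n V * x ^ n‖ := by
  set HasInv : 𝕜[X] → Prop := fun f => ∃ V : PowerSeries 𝕜, (f : PowerSeries 𝕜) * V = 1 ∧
      Summable fun n => ‖PowerSeries.coeff n V * x ^ n‖
  have hmul : ∀ f g, HasInv f → HasInv g → HasInv (f * g) := by
    rintro f g ⟨V, hV, hVs⟩ ⟨W, hW, hWs⟩
    refine ⟨V * W, ?_, PowerSeries.summable_norm_coeff_mul_mul_pow hVs hWs⟩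
    rw [coe_mul, mul_mul_mul_comm, hV, hW, one_mul]
  have hC : ∀ c : 𝕜, c ≠ 0 → HasInv (C c) := fun c hc =>
    ⟨PowerSeries.C c⁻¹, by rw [coe_C, ← map_mul, mul_inv_cancel₀ hc, map_one],
      (summable_norm_coeff_coe_mul_pow (C c⁻¹) x).congr fun n => by rw [coe_C]⟩
  have hlin : ∀ z ∈ p.roots, HasInv (X - C z) := by
    intro z hz
    have hx : ‖x‖ < ‖z‖ := hroots z (isRoot_of_mem_roots hz)
    have hz0 : z ≠ 0 := norm_pos_iff.1 ((norm_nonneg x).trans_lt hx)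
    refine ⟨-PowerSeries.invUnitsSub (Units.mk0 z hz0), ?_,
      by simpa using PowerSeries.summable_norm_coeff_invUnitsSub_mul_pow (u := Units.mk0 z hz0) hx⟩
    rw [mul_neg, ← neg_mul, mul_comm, coe_sub, coe_X, coe_C, neg_sub,
      ← PowerSeries.invUnitsSub_mul_sub (Units.mk0 z hz0), Units.val_mk0]
  have hp : p ≠ 0 := by
    rintro rfl
    exact (norm_nonneg x).not_gt ((hroots 0 (by simp)).trans_eq norm_zero)
  rw [← C_leadingCoeff_mul_prod_multiset_X_sub_C (IsAlgClosed.card_roots_eq_natDegree (p := p))]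
  refine hmul _ _ (hC _ (leadingCoeff_ne_zero.2 hp)) (Multiset.prod_induction _ _ hmul ?_ ?_)
  · exact ⟨1, by simp, (summable_norm_coeff_coe_mul_pow 1 x).congr fun n => by simp⟩
  · intro f hf
    obtain ⟨z, hz, rfl⟩ := Multiset.mem_map.1 hf
    exact hlin z hz

end Polynomial

namespace PowerSeries

theorem summable_norm_coeff_mul_pow_of_mul_eq {g : ℝ⟦X⟧} {p P : ℝ[X]} (h : g * p = P) {x : ℝ}
    (hroots : ∀ z : ℂ, (p.map (algebraMap ℝ ℂ)).IsRoot z → |x| < ‖z‖) :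
    Summable fun n => ‖coeff n g * x ^ n‖ := by
  obtain ⟨V, hV, hVs⟩ := Polynomial.exists_coe_mul_eq_one_and_summable_norm (x := (x : ℂ))
    (by simpa only [Complex.norm_real, Real.norm_eq_abs] using hroots)
  have hgV : map (algebraMap ℝ ℂ) g = (P.map (algebraMap ℝ ℂ) : ℂ⟦X⟧) * V := by
    rw [Polynomial.polynomial_map_coe, ← h, map_mul, mul_assoc, ← Polynomial.polynomial_map_coe, hV,
      mul_one]
  have := summable_norm_coeff_mul_mul_pow
    (Polynomial.summable_norm_coeff_coe_mul_pow (P.map (algebraMap ℝ ℂ)) x) hVs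
  rw [← hgV] at this
  simpa only [coeff_map, Complex.coe_algebraMap, ← Complex.ofReal_pow, ← Complex.ofReal_mul,
    Complex.norm_real] using this

/-! ### Coefficients of a rational function with a dominant pole -/

theorem rescale_C_sub_X {S : Type*} [CommRing S] (t : S) :
    rescale t (C t - X) = C t * (1 - X) := by
  rw [map_sub, rescale_X, mul_sub, mul_one]
  congr 1
  ext n
  by_cases hn : n = 0 <;> simp [coeff_rescale, coeff_C, hn]

theorem coeff_mul_pow_eq_sum_of_mul_C_sub_X_pow_eq {S : Type*} [CommRing S] {F g : S⟦X⟧} {t : S}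
    {k : ℕ} (h : F * (C t - X) ^ (k + 1) = g) (r : ℕ) :
    t ^ (k + 1) * (coeff r F * t ^ r) =
      ∑ j ∈ range (r + 1), coeff j g * t ^ j * (k + (r - j)).choose k := by
  have hg : C (t ^ (k + 1)) * rescale t F = rescale t g * mk fun n => ((k + n).choose k : S) := by
    rw [← h, map_mul, map_pow (rescale t), rescale_C_sub_X, mul_pow, map_pow]
    linear_combination (-(rescale t F * C t ^ (k + 1))) * mk_add_choose_mul_one_sub_pow_eq_one S k
  have := congrArg (coeff r) hg
  rw [coeff_C_mul, coeff_rescale, coeff_mul, Nat.sum_antidiagonal_eq_sum_range_succ_mk] at this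
  simpa [coeff_rescale, mul_comm (t ^ _)] using this

end PowerSeries

theorem isEquivalent_choose_add (k c : ℕ) :
    (fun n : ℕ => ((k + (n + c)).choose k : ℝ)) ~[atTop] fun n => (n : ℝ) ^ k / k ! := by
  have hcast : (fun n : ℕ => ((k + (n + c) : ℕ) : ℝ)) ~[atTop] fun n => (n : ℝ) := by
    have := IsEquivalent.refl.add_const_of_norm_tendsto_atTop (c := ((k + c : ℕ) : ℝ))
      (tendsto_norm_atTop_atTop.comp tendsto_natCast_atTop_atTop)
    refine this.congr_left (Eventually.of_forall fun n => ?_)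
    push_cast; ring
  have hshift : Tendsto (fun n : ℕ => k + (n + c)) atTop atTop :=
    tendsto_atTop_mono (fun n => show n ≤ k + (n + c) by omega) tendsto_id
  exact ((isEquivalent_choose k).comp_tendsto hshift).trans ((hcast.pow k).div IsEquivalent.refl)

theorem tendsto_choose_sub_div_choose (k j : ℕ) :
    Tendsto (fun r : ℕ => ((k + (r - j)).choose k : ℝ) / (k + r).choose k) atTop (𝓝 1) := by
  have hpos : ∀ n, ((k + n).choose k : ℝ) ≠ 0 := fun n => by
    exact_mod_cast (Nat.choose_pos (by omega)).ne'
  have hshift : Tendsto (fun n : ℕ => ((k + n).choose k : ℝ) / (k + (n + j)).choose k) atTop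
      (𝓝 1) := by
    have := (isEquivalent_choose_add k 0).trans (isEquivalent_choose_add k j).symm
    rwa [isEquivalent_iff_tendsto_one (Eventually.of_forall fun n => hpos _)] at this
  refine (hshift.comp (tendsto_sub_atTop_nat j)).congr' ?_
  filter_upwards [eventually_ge_atTop j] with r hr
  simp [Nat.sub_add_cancel hr]

theorem tendsto_sum_mul_choose_div_choose (k : ℕ) {w : ℕ → ℝ} (hw : Summable w) :
    Tendsto (fun r : ℕ => (∑ j ∈ range (r + 1), w j * (k + (r - j)).choose k) / (k + r).choose k)
      atTop (𝓝 (∑' j, w j)) := by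
  set ratio : ℕ → ℕ → ℝ := fun r j => ((k + (r - j)).choose k : ℝ) / (k + r).choose k
  have hratio : ∀ r j, j ≤ r → 0 ≤ ratio r j ∧ ratio r j ≤ 1 := fun r j hj =>
    ⟨by positivity, div_le_one_of_le₀ (by exact_mod_cast Nat.choose_le_choose k (by omega))
      (by positivity)⟩
  have hsum : ∀ r, (∑ j ∈ range (r + 1), w j * (k + (r - j)).choose k) / (k + r).choose k =
      ∑' j, if j ≤ r then w j * ratio r j else 0 := by
    intro r
    rw [tsum_eq_sum (s := range (r + 1)) fun j hj => if_neg (by simpa using hj), sum_div]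
    refine sum_congr rfl fun j hj => ?_
    rw [if_pos (by simpa [Nat.lt_succ_iff] using hj), mul_div_assoc]
  simp only [hsum]
  refine tendsto_tsum_of_dominated_convergence hw.abs (fun j => ?_) (Eventually.of_forall ?_)
  · have := (tendsto_choose_sub_div_choose k j).const_mul (w j)
    rw [mul_one] at this
    refine this.congr' ?_
    filter_upwards [eventually_ge_atTop j] with r hr
    rw [if_pos hr]
  · intro r j
    split_ifs with hj
    · rw [norm_mul, Real.norm_eq_abs, Real.norm_of_nonneg (hratio r j hj).1]
      exact mul_le_of_le_one_right (abs_nonneg _) (hratio r j hj).2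
    · simp

namespace Polynomial

theorem eval_ne_zero_of_isCoprime {R : Type*} [CommRing R] [Nontrivial R] {P Q : R[X]}
    (h : IsCoprime P Q) {t : R} (hQ : Q.eval t = 0) : P.eval t ≠ 0 := by
  have := h.map (evalRingHom t)
  rw [coe_evalRingHom, hQ, isCoprime_zero_right] at this
  exact this.ne_zero

theorem exists_eq_C_sub_X_pow_mul {Q : ℝ[X]} (hQ : Q ≠ 0) {t : ℝ} {b : ℕ}
    (hmult : rootMultiplicity (t : ℂ) (Q.map (algebraMap ℝ ℂ)) = b)
    (hroots : ∀ z : ℂ, (Q.map (algebraMap ℝ ℂ)).IsRoot z → ‖z‖ ≤ t → z = t) :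
    ∃ Q₁ : ℝ[X], Q = (C t - X) ^ b * Q₁ ∧
      ∀ z : ℂ, (Q₁.map (algebraMap ℝ ℂ)).IsRoot z → t < ‖z‖ := by
  rw [← Complex.coe_algebraMap, ← eq_rootMultiplicity_map (algebraMap ℝ ℂ).injective] at hmult
  subst hmult
  set Q₂ := Q /ₘ (X - C t) ^ rootMultiplicity t Q
  have hQ₂ : Q₂.eval t ≠ 0 := eval_divByMonic_pow_rootMultiplicity_ne_zero t hQ
  have hQ_eq : Q = (C t - X) ^ rootMultiplicity t Q * ((-1) ^ rootMultiplicity t Q * Q₂) := by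
    conv_lhs => rw [← pow_mul_divByMonic_rootMultiplicity_eq Q t]
    rw [← mul_assoc, ← mul_pow]
    ring
  refine ⟨_, hQ_eq, fun z hz => lt_of_not_ge fun hzt => ?_⟩
  have hQz : (Q.map (algebraMap ℝ ℂ)).IsRoot z := by
    rw [hQ_eq, Polynomial.map_mul]
    exact root_mul.2 (Or.inr hz)
  obtain rfl := hroots z hQz hzt
  rw [IsRoot, eval_map_algebraMap, ← Complex.coe_algebraMap,
    aeval_algebraMap_apply_eq_algebraMap_eval] at hz
  simp [hQ₂] at hz

end Polynomial

namespace PowerSeries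

theorem tendsto_coeff_mul_pow_div_choose {F : ℝ⟦X⟧} {P Q₁ : ℝ[X]} {t : ℝ} (ht : t ≠ 0) {k : ℕ}
    (hF : F * (((Polynomial.C t - Polynomial.X) ^ (k + 1) * Q₁ : ℝ[X]) : ℝ⟦X⟧) = P)
    (hroots : ∀ z : ℂ, (Q₁.map (algebraMap ℝ ℂ)).IsRoot z → |t| < ‖z‖) :
    Tendsto (fun r => coeff r F * t ^ r / (k + r).choose k) atTop
      (𝓝 (P.eval t / Q₁.eval t / t ^ (k + 1))) := by
  set g := F * (C t - X) ^ (k + 1)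
  have hg : g * Q₁ = P := by
    rw [← hF]
    push_cast
    ring
  have hgs := summable_norm_coeff_mul_pow_of_mul_eq hg hroots
  have hQ₁ : Q₁.eval t ≠ 0 := fun h => by
    simpa using hroots _ (Polynomial.IsRoot.map (f := algebraMap ℝ ℂ) h)
  have hG : ∑' n, coeff n g * t ^ n = P.eval t / Q₁.eval t := by
    rw [eq_div_iff hQ₁, ← Polynomial.tsum_coeff_coe_mul_pow, ← Polynomial.tsum_coeff_coe_mul_pow,
      ← tsum_coeff_mul_mul_pow hgs (Polynomial.summable_norm_coeff_coe_mul_pow _ _), hg]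
  rw [← hG]
  refine ((tendsto_sum_mul_choose_div_choose k hgs.of_norm).div_const (t ^ (k + 1))).congr
    fun r => ?_
  rw [← coeff_mul_pow_eq_sum_of_mul_C_sub_X_pow_eq rfl r]
  field_simp

theorem isTheta_coeff_of_mul_eq {F : ℝ⟦X⟧} (hF₀ : ∀ r, 0 ≤ coeff r F) {P Q₁ : ℝ[X]} {t : ℝ}
    (ht : 0 < t) (hP : P.eval t ≠ 0) {k : ℕ}
    (hF : F * (((Polynomial.C t - Polynomial.X) ^ (k + 1) * Q₁ : ℝ[X]) : ℝ⟦X⟧) = P)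
    (hroots : ∀ z : ℂ, (Q₁.map (algebraMap ℝ ℂ)).IsRoot z → t < ‖z‖) :
    (fun r => coeff r F) =Θ[atTop] fun r => ((k + r).choose k : ℝ) * t⁻¹ ^ r := by
  have hQ₁ : Q₁.eval t ≠ 0 := fun h => by
    simpa [abs_of_pos ht] using hroots _ (Polynomial.IsRoot.map (f := algebraMap ℝ ℂ) h)
  have hlim := tendsto_coeff_mul_pow_div_choose ht.ne' hF (by simpa [abs_of_pos ht] using hroots)
  have hL : 0 < P.eval t / Q₁.eval t / t ^ (k + 1) :=
    lt_of_le_of_ne (ge_of_tendsto' hlim fun r => by have := hF₀ r; positivity)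
      (div_ne_zero (div_ne_zero hP hQ₁) (by positivity)).symm
  refine (isTheta_of_div_tendsto_nhds_ne_zero (hlim.congr fun r => ?_) hL.ne').symm
  rw [inv_pow]
  field_simp

end PowerSeries

/-! ### From the size of the coefficients to the size of the partial sums -/

theorem Asymptotics.IsTheta.comp_tendsto {α β E F : Type*} [Norm E] [Norm F] {l : Filter α}
    {l' : Filter β} {f : α → E} {g : α → F} (h : f =Θ[l] g) {e : β → α} (he : Tendsto e l' l) :
    (f ∘ e) =Θ[l'] (g ∘ e) :=
  ⟨h.1.comp_tendsto he, h.2.comp_tendsto he⟩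

theorem isTheta_choose_add (k : ℕ) :
    (fun n : ℕ => ((k + n).choose k : ℝ)) =Θ[atTop] fun n => (n : ℝ) ^ k := by
  refine (isEquivalent_choose_add k 0).isTheta.trans ?_
  simpa only [div_eq_mul_inv, mul_comm _ (k ! : ℝ)⁻¹] using
    isTheta_rfl.const_mul_left (inv_ne_zero (Nat.cast_ne_zero.2 k.factorial_ne_zero))

theorem isTheta_sum_range_of_isTheta {s m : ℕ → ℝ} (hs : ∀ r, 0 ≤ s r) (hm : Monotone m)
    (hm₀ : ∀ r, 0 < m r) {u : ℝ} (hu : 1 < u) (h : s =Θ[atTop] fun r => m r * u ^ r) :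
    (fun R => ∑ r ∈ range (R + 1), s r) =Θ[atTop] fun R => m R * u ^ R := by
  refine ⟨?_, h.symm.isBigO.trans (IsBigO.of_bound' (Eventually.of_forall fun R => ?_))⟩
  · obtain ⟨C, hC, hbound⟩ := bound_of_isBigO_nat_atTop h.isBigO
    have hgeom : ∀ R, ∑ r ∈ range (R + 1), u ^ r ≤ u / (u - 1) * u ^ R := fun R => by
      rw [geom_sum_eq hu.ne', div_mul_eq_mul_div, pow_succ', div_le_div_iff_of_pos_right
        (by linarith)]
      linarith
    refine IsBigO.of_bound (C * (u / (u - 1))) (Eventually.of_forall fun R => ?_)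
    have hu₀ : ∀ r, 0 < u ^ r := fun r => pow_pos (by linarith) r
    have hle : ∀ r ∈ range (R + 1), s r ≤ C * (m R * u ^ r) := fun r hr => by
      have := hbound (mul_pos (hm₀ r) (hu₀ r)).ne'
      rw [Real.norm_of_nonneg (hs r), Real.norm_of_nonneg (mul_pos (hm₀ r) (hu₀ r)).le] at this
      exact this.trans (mul_le_mul_of_nonneg_left (mul_le_mul_of_nonneg_right
        (hm (by simpa [Nat.lt_succ_iff] using hr)) (hu₀ r).le) hC.le)
    rw [Real.norm_of_nonneg (sum_nonneg fun r _ => hs r),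
      Real.norm_of_nonneg (mul_pos (hm₀ R) (hu₀ R)).le]
    calc ∑ r ∈ range (R + 1), s r ≤ C * m R * ∑ r ∈ range (R + 1), u ^ r := by
          rw [mul_sum]
          exact (sum_le_sum hle).trans_eq (sum_congr rfl fun r _ => by ring)
      _ ≤ C * m R * (u / (u - 1) * u ^ R) :=
          mul_le_mul_of_nonneg_left (hgeom R) (mul_pos hC (hm₀ R)).le
      _ = C * (u / (u - 1)) * (m R * u ^ R) := by ring
  · rw [Real.norm_of_nonneg (hs R), Real.norm_of_nonneg (sum_nonneg fun r _ => hs r)]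
    exact single_le_sum (fun r _ => hs r) (self_mem_range_succ R)

theorem sum_Icc_eq_sum_range_log {M : Type*} [AddCommMonoid M] {q : ℕ} (hq : 2 ≤ q) {a : ℕ → M}
    (hsupp : ∀ n, (¬ ∃ r : ℕ, 1 ≤ r ∧ n = q ^ r) → a n = 0) (N : ℕ) :
    ∑ n ∈ Icc 1 N, a n = ∑ r ∈ range (Nat.log q N + 1), a (q ^ r) := by
  have ha₁ : a 1 = 0 := hsupp 1 fun ⟨r, hr, h⟩ => by
    have := Nat.one_lt_pow (by omega : r ≠ 0) (by omega : 1 < q); omega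
  rw [← sum_image fun r _ s _ h => Nat.pow_right_injective hq h]
  refine sum_congr_of_eq_on_inter (fun n hn hn' => hsupp n ?_) (fun n hn hn' => ?_)
    fun _ _ _ => rfl
  · rintro ⟨r, -, rfl⟩
    exact hn' (mem_image.2 ⟨r, mem_range.2 (Nat.lt_succ_of_le
      (Nat.le_log_of_pow_le (by omega) (mem_Icc.1 hn).2)), rfl⟩)
  · obtain ⟨r, hr, rfl⟩ := mem_image.1 hn
    rcases r with _ | r
    · exact ha₁
    have hr : r + 1 ≤ Nat.log q N := Nat.lt_succ_iff.1 (mem_range.1 hr)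
    have hN : N ≠ 0 := by rintro rfl; simp at hr
    exact absurd (mem_Icc.2 ⟨Nat.one_le_pow _ _ (by omega), Nat.pow_le_of_le_log hN hr⟩) hn'

section LogFloor

variable {q : ℕ}

theorem pow_log_floor_le {X : ℝ} (hX : 1 ≤ X) : (q : ℝ) ^ Nat.log q ⌊X⌋₊ ≤ X :=
  calc (q : ℝ) ^ Nat.log q ⌊X⌋₊ ≤ ⌊X⌋₊ := by
        exact_mod_cast Nat.pow_log_le_self q (Nat.floor_pos.2 hX).ne'
    _ ≤ X := Nat.floor_le (by linarith)

theorem lt_pow_log_floor_succ (hq : 1 < q) (X : ℝ) : X < (q : ℝ) ^ (Nat.log q ⌊X⌋₊ + 1) :=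
  calc X < ⌊X⌋₊ + 1 := Nat.lt_floor_add_one X
    _ ≤ (q : ℝ) ^ (Nat.log q ⌊X⌋₊ + 1) := by
        exact_mod_cast Nat.lt_pow_succ_log_self hq _

theorem tendsto_log_floor (hq : 1 < q) :
    Tendsto (fun X : ℝ => Nat.log q ⌊X⌋₊) atTop atTop :=
  (Nat.log_monotone.tendsto_atTop_atTop fun R => ⟨q ^ R, (Nat.log_pow hq R).ge⟩).comp
    tendsto_nat_floor_atTop

theorem isTheta_log_floor (hq : 1 < q) :
    (fun X : ℝ => (Nat.log q ⌊X⌋₊ : ℝ)) =Θ[atTop] Real.log := by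
  have hq' : (1 : ℝ) < q := by exact_mod_cast hq
  have hlogq : 0 < Real.log q := Real.log_pos hq'
  have hlow : ∀ X : ℝ, 1 ≤ X → Nat.log q ⌊X⌋₊ * Real.log q ≤ Real.log X := fun X hX => by
    rw [← Real.log_pow]
    exact Real.log_le_log (by positivity) (pow_log_floor_le hX)
  refine ⟨IsBigO.of_bound (Real.log q)⁻¹ ?_, IsBigO.of_bound (2 * Real.log q) ?_⟩
  · filter_upwards [eventually_ge_atTop 1] with X hX
    rw [Real.norm_natCast, Real.norm_of_nonneg (Real.log_nonneg hX), inv_mul_eq_div,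
      le_div_iff₀ hlogq]
    exact hlow X hX
  · filter_upwards [eventually_ge_atTop (q : ℝ)] with X hX
    have hR : 1 ≤ Nat.log q ⌊X⌋₊ := Nat.log_pos hq (Nat.le_floor hX)
    have hX₀ : 0 < X := by linarith
    have hup : Real.log X < (Nat.log q ⌊X⌋₊ + 1) * Real.log q := by
      rw [← Nat.cast_add_one, ← Real.log_pow]
      exact Real.log_lt_log hX₀ (by exact_mod_cast lt_pow_log_floor_succ hq X)
    have hR' : (1 : ℝ) ≤ Nat.log q ⌊X⌋₊ := by exact_mod_cast hR
    rw [Real.norm_natCast, Real.norm_of_nonneg (Real.log_nonneg (by linarith))]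
    nlinarith

theorem isTheta_rpow_pow_log_floor (hq : 1 < q) {A : ℝ} (hA : 0 ≤ A) :
    (fun X : ℝ => ((q : ℝ) ^ A) ^ Nat.log q ⌊X⌋₊) =Θ[atTop] fun X => X ^ A := by
  have hq₀ : (0 : ℝ) ≤ q := Nat.cast_nonneg q
  refine ⟨IsBigO.of_bound 1 ?_, IsBigO.of_bound ((q : ℝ) ^ A) ?_⟩ <;>
    filter_upwards [eventually_ge_atTop 1] with X hX <;>
    rw [Real.norm_of_nonneg (by positivity), Real.norm_of_nonneg (by positivity),
      Real.rpow_pow_comm hq₀]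
  · rw [one_mul]
    exact Real.rpow_le_rpow (by positivity) (pow_log_floor_le hX) hA
  · rw [← Real.rpow_pow_comm hq₀, ← pow_succ', Real.rpow_pow_comm hq₀]
    exact Real.rpow_le_rpow (by linarith) (lt_pow_log_floor_succ hq X).le hA

end LogFloor

theorem isTheta_sum_Icc_floor {q : ℕ} (hq : 2 ≤ q) {a : ℕ → ℝ} (ha : ∀ n, 0 ≤ a n)
    (hsupp : ∀ n, (¬ ∃ r : ℕ, 1 ≤ r ∧ n = q ^ r) → a n = 0) {A : ℝ} (hA : 0 < A) {k : ℕ}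
    (h : (fun r => a (q ^ r)) =Θ[atTop] fun r => ((k + r).choose k : ℝ) * ((q : ℝ) ^ A) ^ r) :
    (fun X : ℝ => ∑ n ∈ Icc 1 ⌊X⌋₊, a n) =Θ[atTop] fun X => X ^ A * Real.log X ^ k := by
  have hq₁ : 1 < q := by omega
  have hsums := IsTheta.comp_tendsto (isTheta_sum_range_of_isTheta (fun r => ha _)
    (fun r s hrs => by exact_mod_cast Nat.choose_le_choose k (by omega))
    (fun r => by exact_mod_cast Nat.choose_pos (by omega))
    (Real.one_lt_rpow (by exact_mod_cast hq₁) hA) h) (tendsto_log_floor hq₁)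
  have hchoose := ((isTheta_choose_add k).comp_tendsto (tendsto_log_floor hq₁)).trans
    ((isTheta_log_floor hq₁).pow k)
  simp only [sum_Icc_eq_sum_range_log hq hsupp]
  exact hsums.trans ((hchoose.mul (isTheta_rpow_pow_log_floor hq₁ hA.le)).trans_eventuallyEq
    (Eventually.of_forall fun X => mul_comm _ _))

theorem exists_pos_bounds_of_isTheta {α : Type*} [Nonempty α] [SemilatticeSup α] {f g : α → ℝ}
    (h : f =Θ[atTop] g) (hf : ∀ᶠ x in atTop, 0 ≤ f x) (hg : ∀ᶠ x in atTop, 0 ≤ g x) :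
    ∃ c C : ℝ, 0 < c ∧ 0 < C ∧ ∃ x₀, ∀ x, x₀ ≤ x → c * g x ≤ f x ∧ f x ≤ C * g x := by
  obtain ⟨C, hC, hfg⟩ := h.isBigO.exists_pos
  obtain ⟨c, hc, hgf⟩ := h.symm.isBigO.exists_pos
  obtain ⟨x₀, hx₀⟩ := eventually_atTop.1 (hfg.bound.and (hgf.bound.and (hf.and hg)))
  refine ⟨c⁻¹, C, inv_pos.2 hc, hC, x₀, fun x hx => ?_⟩
  obtain ⟨hfx, hgx, hf₀, hg₀⟩ := hx₀ x hx
  rw [Real.norm_of_nonneg hf₀, Real.norm_of_nonneg hg₀] at hfx hgx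
  exact ⟨(inv_mul_le_iff₀ hc).2 hgx, hfx⟩

theorem tauberian_powers_of_q_general (q : ℕ) (hq : 2 ≤ q) (a : ℕ → ℝ) (ha : ∀ n, 0 ≤ a n)
    (hsupp : ∀ n, (¬ ∃ r : ℕ, 1 ≤ r ∧ n = q ^ r) → a n = 0)
    (A : ℝ) (hA : 0 < A) (b : ℕ) (hb : 1 ≤ b)
    (P Q : Polynomial ℝ) (hcop : IsCoprime P Q)
    (hrat : (PowerSeries.mk fun r => a (q ^ r)) * (Q : PowerSeries ℝ) =
      (P : PowerSeries ℝ))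
    (hpole : Polynomial.rootMultiplicity ((((q : ℝ) ^ (-A) : ℝ)) : ℂ)
      (Q.map (algebraMap ℝ ℂ)) = b)
    (hnopole : ∀ z : ℂ, (Q.map (algebraMap ℝ ℂ)).IsRoot z →
      ‖z‖ ≤ (q : ℝ) ^ (-A) → z = (((q : ℝ) ^ (-A) : ℝ) : ℂ)) :
    ∃ c C : ℝ, 0 < c ∧ 0 < C ∧ ∃ X₀ : ℝ, ∀ X : ℝ, X₀ ≤ X →
      c * X ^ A * (Real.log X) ^ (b - 1) ≤ ∑ n ∈ Finset.Icc 1 ⌊X⌋₊, a n ∧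
      ∑ n ∈ Finset.Icc 1 ⌊X⌋₊, a n ≤ C * X ^ A * (Real.log X) ^ (b - 1) := by
  obtain ⟨k, rfl⟩ : ∃ k, b = k + 1 := ⟨b - 1, by omega⟩
  have hq₀ : (0 : ℝ) < q := by positivity
  rw [Real.rpow_neg hq₀.le] at hpole hnopole
  have hQ : Q ≠ 0 := by rintro rfl; simp at hpole
  obtain ⟨Q₁, rfl, hQ₁⟩ := Polynomial.exists_eq_C_sub_X_pow_mul hQ hpole hnopole
  have hΘ := PowerSeries.isTheta_coeff_of_mul_eq (fun r => by simpa using ha _) (by positivity)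
    (Polynomial.eval_ne_zero_of_isCoprime hcop (by simp)) hrat hQ₁
  simp only [PowerSeries.coeff_mk, inv_inv] at hΘ
  obtain ⟨c, C, hc, hC, X₀, hX₀⟩ := exists_pos_bounds_of_isTheta
    (isTheta_sum_Icc_floor hq ha hsupp hA hΘ)
    (Eventually.of_forall fun X => sum_nonneg fun n _ => ha n)
    ((eventually_ge_atTop 1).mono fun X hX =>
      mul_nonneg (Real.rpow_nonneg (by linarith) A) (pow_nonneg (Real.log_nonneg hX) k))
  exact ⟨c, C, hc, hC, X₀, fun X hX => by simpa only [Nat.add_sub_cancel, mul_assoc] using hX₀ X hX⟩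

/-- Tauberian lemma: if `{a_n}` is supported on powers of `q`, and the generating
series `Σ_{r} a_{q^r} t^r` is a rational function `P/Q` of `t = q^{-s}` with a pole
of order `b` at `t = q^{-A}` and no other poles in `|t| ≤ q^{-A}`, then
`Σ_{n ≤ X} a_n ≍ X^A (log X)^{b-1}`. -/
theorem tauberian_powers_of_q (q : ℕ) (hq : 2 ≤ q) (a : ℕ → ℝ) (ha : ∀ n, 0 ≤ a n)
    (hsupp : ∀ n, (¬ ∃ r : ℕ, 1 ≤ r ∧ n = q ^ r) → a n = 0)
    (A : ℝ) (hA : 0 < A) (b : ℕ) (hb : 1 ≤ b)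
    (P Q : Polynomial ℝ) (hcop : IsCoprime P Q) (hQ0 : Q.coeff 0 ≠ 0)
    (hrat : (PowerSeries.mk fun r => a (q ^ r)) * (Q : PowerSeries ℝ) =
      (P : PowerSeries ℝ))
    (hpole : Polynomial.rootMultiplicity ((((q : ℝ) ^ (-A) : ℝ)) : ℂ)
      (Q.map (algebraMap ℝ ℂ)) = b)
    (hnopole : ∀ z : ℂ, (Q.map (algebraMap ℝ ℂ)).IsRoot z →
      ‖z‖ ≤ (q : ℝ) ^ (-A) → z = (((q : ℝ) ^ (-A) : ℝ) : ℂ)) :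
    ∃ c C : ℝ, 0 < c ∧ 0 < C ∧ ∃ X₀ : ℝ, ∀ X : ℝ, X₀ ≤ X →
      c * X ^ A * (Real.log X) ^ (b - 1) ≤ ∑ n ∈ Finset.Icc 1 ⌊X⌋₊, a n ∧
      ∑ n ∈ Finset.Icc 1 ⌊X⌋₊, a n ≤ C * X ^ A * (Real.log X) ^ (b - 1) :=
  tauberian_powers_of_q_general q hq a ha hsupp A hA b hb P Q hcop hrat hpole hnopole
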